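/- Let G be a finite group, S ⊆ G with S = S⁻¹ and e ∉ S, and suppose Γ = Cay(G, S) is connected, non-bipartite and reduced. Identify Γ × K₂ with the graph on G × ℤ/2ℤ in which (g,i) and (h,j) are adjacent iff h g⁻¹ ∈ S and i ≠ j. Then for every g ∈ G the following are equivalent: (i) the vertex (g,1) lies in the orbit of (e,1) under the stabilizer of (e,0) in Aut(Γ × K₂); (ii) there is a two-fold automorphism (σ₁, σ₂) of Γ with σ₁⁻¹(σ₂(e)) = g; (iii) there exist g₀ ∈ G and a two-fold automorphism (σ₁, σ₂) of Γ with σ₁⁻¹(σ₂(g₀)) = g·g₀; (iv) for every g₀ ∈ G there is a two-fold automorphism (σ₁, σ₂) of Γ with σ₁⁻¹(σ₂(g₀)) = g·g₀. -/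

import Mathlib

/-- The Cayley graph of a group `G` with connection set `S`:
`g` and `h` are adjacent iff `h * g⁻¹ ∈ S`. -/
def cayleyGraph {G : Type*} [Group G] (S : Set G) : SimpleGraph G :=
  SimpleGraph.fromRel (fun g h => h * g⁻¹ ∈ S)

/-- The tensor product of a simple graph with `K₂`, on vertex set `V × ZMod 2`. -/
def tensorK2 {V : Type*} (Γ : SimpleGraph V) : SimpleGraph (V × ZMod 2) where
  Adj p q := Γ.Adj p.1 q.1 ∧ p.2 ≠ q.2
  symm := by
    constructor
    intro p q h
    exact ⟨h.1.symm, h.2.symm⟩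
  loopless := by
    constructor
    intro p h
    exact h.2 rfl

/-- A pair of permutations `(σ₁, σ₂)` is a two-fold automorphism of `Γ` iff adjacency of
`v, w` is equivalent to adjacency of `σ₁ v, σ₂ w`. -/
def IsTwoFoldAuto {V : Type*} (Γ : SimpleGraph V) (σ₁ σ₂ : Equiv.Perm V) : Prop :=
  ∀ v w : V, Γ.Adj v w ↔ Γ.Adj (σ₁ v) (σ₂ w)

/- ### Auxiliary lemmas -/

theorem Equiv.Perm.apply_inv_self {α : Type*} (f : Equiv.Perm α) (x : α) : f (f⁻¹ x) = x :=
  f.apply_symm_apply x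

theorem Equiv.Perm.inv_apply_self {α : Type*} (f : Equiv.Perm α) (x : α) : f⁻¹ (f x) = x :=
  f.symm_apply_apply x

lemma cayley_mul_right {G : Type*} [Group G] (S : Set G) (a v w : G) :
    (cayleyGraph S).Adj (v * a) (w * a) ↔ (cayleyGraph S).Adj v w := by
  have h1 : w * a * (a⁻¹ * v⁻¹) = w * v⁻¹ := by group
  have h2 : v * a * (a⁻¹ * w⁻¹) = v * w⁻¹ := by group
  simp [cayleyGraph, SimpleGraph.fromRel_adj, mul_inv_rev, h1, h2]

lemma tf_swap_inv {V : Type*} {Γ : SimpleGraph V} {σ₁ σ₂ : Equiv.Perm V}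
    (h : IsTwoFoldAuto Γ σ₁ σ₂) : IsTwoFoldAuto Γ σ₂⁻¹ σ₁⁻¹ := by
  intro v w
  have := h (σ₁⁻¹ w) (σ₂⁻¹ v)
  simp only [Equiv.Perm.apply_inv_self] at this
  rw [Γ.adj_comm v w, Γ.adj_comm (σ₂⁻¹ v) (σ₁⁻¹ w)]
  exact this.symm

lemma tf_mul_right {G : Type*} [Group G] {S : Set G} {σ₁ σ₂ : Equiv.Perm G}
    (h : IsTwoFoldAuto (cayleyGraph S) σ₁ σ₂) (a : G) :
    IsTwoFoldAuto (cayleyGraph S) (σ₁ * Equiv.mulRight a) (σ₂ * Equiv.mulRight a) := by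
  intro v w
  rw [← cayley_mul_right S a v w]
  exact h (v * a) (w * a)

lemma zmod2_ne_succ : ∀ i : ZMod 2, i ≠ i + 1 := by decide

lemma zmod2_cases (i : ZMod 2) : i = 0 ∨ i = 1 := by revert i; decide

lemma walk_lift {V : Type*} {Γ : SimpleGraph V} :
    ∀ {v w : V} (p : Γ.Walk v w) (i : ZMod 2),
      (tensorK2 Γ).Reachable (v, i) (w, i + p.length) := by
  intro v w p
  induction p with
  | nil => intro i; simpa using SimpleGraph.Reachable.refl _
  | cons h q ih =>
      intro i
      rename_i a b c
      have hadj : (tensorK2 Γ).Adj (a, i) (b, i + 1) := ⟨h, zmod2_ne_succ i⟩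
      have := ih (i + 1)
      have hlen : i + 1 + (q.length : ZMod 2) = i + ((q.cons h).length : ZMod 2) := by
        rw [SimpleGraph.Walk.length_cons]
        push_cast
        ring
      rw [hlen] at this
      exact hadj.reachable.trans this

lemma reach_from_base {V : Type*} {Γ : SimpleGraph V} (hc : Γ.Connected) (x : V)
    (u : V) (i : ZMod 2) : ∃ j, (tensorK2 Γ).Reachable (x, j) (u, i) := by
  obtain ⟨p⟩ := hc.preconnected x u
  refine ⟨i - p.length, ?_⟩
  have := walk_lift (Γ := Γ) p (i - p.length)
  simpa using this

def tensorSwap {V : Type*} (Γ : SimpleGraph V) : tensorK2 Γ ≃g tensorK2 Γ where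
  toEquiv := Equiv.prodCongr (Equiv.refl V) (Equiv.addLeft 1)
  map_rel_iff' := by
    intro p q
    show (Γ.Adj _ _ ∧ (1 + p.2 ≠ 1 + q.2)) ↔ _
    simp [tensorK2]

lemma tensor_preconnected {V : Type*} {Γ : SimpleGraph V} (hc : Γ.Connected)
    (x : V) (hnbip : ¬ Γ.Colorable 2) : (tensorK2 Γ).Preconnected := by
  classical
  have key : (tensorK2 Γ).Reachable (x, 0) (x, 1) := by
    by_contra hnr
    apply hnbip
    refine ⟨SimpleGraph.Coloring.mk
      (fun v => if (tensorK2 Γ).Reachable (x, 0) (v, 0) then (0 : Fin 2) else 1) ?_⟩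
    intro v w hvw heq
    have hadj : (tensorK2 Γ).Adj (v, 0) (w, 1) := ⟨hvw, by simp⟩
    by_cases hv : (tensorK2 Γ).Reachable (x, 0) (v, 0)
    · have hw : (tensorK2 Γ).Reachable (x, 0) (w, 0) := by
        by_contra hw; simp [hv, hw] at heq
      have h1 : (tensorK2 Γ).Reachable (x, 0) (w, 1) := hv.trans hadj.reachable
      have h2 : (tensorK2 Γ).Reachable (x, 1) (w, 1) := by
        have := hw.map (tensorSwap Γ).toHom
        simpa [tensorSwap, show (1 + 0 : ZMod 2) = 1 by decide] using this
      exact hnr (h1.trans h2.symm)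
    · have hw : ¬ (tensorK2 Γ).Reachable (x, 0) (w, 0) := by
        by_contra hw; simp [hv, hw] at heq
      obtain ⟨j, hj⟩ := reach_from_base hc x v 0
      have hj1 : j = 1 := by
        rcases zmod2_cases j with h | h
        · exact absurd (h ▸ hj) hv
        · exact h
      rw [hj1] at hj
      have h1 : (tensorK2 Γ).Reachable (x, 1) (w, 1) := hj.trans hadj.reachable
      have h2 := h1.map (tensorSwap Γ).toHom
      simp only [tensorSwap] at h2
      have : (tensorK2 Γ).Reachable (x, 0) (w, 0) := by
        simpa [show (1 + 1 : ZMod 2) = 0 by decide] using h2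
      exact hw this
  have base : ∀ p : V × ZMod 2, (tensorK2 Γ).Reachable (x, 0) p := by
    rintro ⟨u, i⟩
    obtain ⟨j, hj⟩ := reach_from_base hc x u i
    rcases zmod2_cases j with h | h
    · exact h ▸ hj
    · exact key.trans (h ▸ hj)
  intro p q
  exact (base p).symm.trans (base q)

lemma iso_parity {V : Type*} {Γ : SimpleGraph V}
    (φ : tensorK2 Γ ≃g tensorK2 Γ) (hpre : (tensorK2 Γ).Preconnected)
    {x : V} (h0 : φ (x, 0) = (x, 0)) : ∀ p, (φ p).2 = p.2 := by
  have step : ∀ {p q}, (tensorK2 Γ).Adj p q → (φ p).2 = p.2 → (φ q).2 = q.2 := by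
    intro p q hpq hp
    have h1 : (tensorK2 Γ).Adj (φ p) (φ q) := φ.map_adj_iff.mpr hpq
    have h2 := h1.2
    have h3 := hpq.2
    revert hp h2 h3
    generalize (φ p).2 = a; generalize (φ q).2 = b
    generalize p.2 = c; generalize q.2 = d
    revert a b c d; decide
  have walkstep : ∀ {p q : V × ZMod 2} (_ : (tensorK2 Γ).Walk p q),
      (φ p).2 = p.2 → (φ q).2 = q.2 := by
    intro p q w
    induction w with
    | nil => exact id
    | cons h _ ih => exact fun hp => ih (step h hp)
  intro p
  obtain ⟨w⟩ := hpre (x, 0) p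
  exact walkstep w (by rw [h0])

def mkIso {V : Type*} (Γ : SimpleGraph V) (τ₁ τ₂ : Equiv.Perm V)
    (h : IsTwoFoldAuto Γ τ₁ τ₂) : tensorK2 Γ ≃g tensorK2 Γ where
  toFun p := (if p.2 = 0 then τ₁ p.1 else τ₂ p.1, p.2)
  invFun p := (if p.2 = 0 then τ₁⁻¹ p.1 else τ₂⁻¹ p.1, p.2)
  left_inv p := by obtain ⟨v, i⟩ := p; dsimp; split_ifs <;> simp
  right_inv p := by obtain ⟨v, i⟩ := p; dsimp; split_ifs <;> simp
  map_rel_iff' := by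
    rintro ⟨v, i⟩ ⟨w, j⟩
    show (Γ.Adj _ _ ∧ i ≠ j) ↔ (Γ.Adj v w ∧ i ≠ j)
    rcases zmod2_cases i with hi | hi <;> rcases zmod2_cases j with hj | hj <;>
      subst hi <;> subst hj <;>
      simp only [Equiv.coe_fn_mk, ne_eq, not_true_eq_false, and_false,
        one_ne_zero, reduceIte, not_false_eq_true, and_true]
    · rw [and_iff_left (by decide : ¬(0:ZMod 2) = 1),
        and_iff_left (by decide : ¬(0:ZMod 2) = 1)]
      exact (h v w).symm
    · rw [Γ.adj_comm (τ₂ v), ← h w v, Γ.adj_comm]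

/-- For a connected, non-bipartite, reduced Cayley graph `Γ = Cay(G,S)` and `g ∈ G`, the
following are equivalent: (i) `(g,1)` lies in the orbit of `(1,1)` under the stabilizer of
`(1,0)` in `Aut(Γ × K₂)`; (ii) some two-fold automorphism `(σ₁,σ₂)` satisfies
`σ₁⁻¹(σ₂ 1) = g`; (iii) `σ₁⁻¹(σ₂ g₀) = g * g₀` for some `g₀` and some two-fold
automorphism; (iv) the same for every `g₀`. -/
theorem basic_set_orbit_iff_alpha_characterizations
    (G : Type*) [Group G] [Fintype G]
    (S : Set G) (hSsymm : ∀ s, s ∈ S ↔ s⁻¹ ∈ S) (hS1 : (1 : G) ∉ S)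
    (hconn : (cayleyGraph S).Connected) (hnbip : ¬ (cayleyGraph S).Colorable 2)
    (hred : ∀ v w : G,
      (cayleyGraph S).neighborSet v = (cayleyGraph S).neighborSet w → v = w)
    (g : G) :
    ((∃ φ : tensorK2 (cayleyGraph S) ≃g tensorK2 (cayleyGraph S),
        φ (1, 0) = (1, 0) ∧ φ (1, 1) = (g, 1)) ↔
      (∃ σ₁ σ₂ : Equiv.Perm G, IsTwoFoldAuto (cayleyGraph S) σ₁ σ₂ ∧ σ₁⁻¹ (σ₂ 1) = g)) ∧
    ((∃ σ₁ σ₂ : Equiv.Perm G, IsTwoFoldAuto (cayleyGraph S) σ₁ σ₂ ∧ σ₁⁻¹ (σ₂ 1) = g) ↔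
      (∃ g₀ : G, ∃ σ₁ σ₂ : Equiv.Perm G,
        IsTwoFoldAuto (cayleyGraph S) σ₁ σ₂ ∧ σ₁⁻¹ (σ₂ g₀) = g * g₀)) ∧
    ((∃ g₀ : G, ∃ σ₁ σ₂ : Equiv.Perm G,
        IsTwoFoldAuto (cayleyGraph S) σ₁ σ₂ ∧ σ₁⁻¹ (σ₂ g₀) = g * g₀) ↔
      (∀ g₀ : G, ∃ σ₁ σ₂ : Equiv.Perm G,
        IsTwoFoldAuto (cayleyGraph S) σ₁ σ₂ ∧ σ₁⁻¹ (σ₂ g₀) = g * g₀)) := by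
  set Γ := cayleyGraph S with hΓ
  -- (iii) → (ii)
  have h32 : (∃ g₀ : G, ∃ σ₁ σ₂ : Equiv.Perm G,
      IsTwoFoldAuto Γ σ₁ σ₂ ∧ σ₁⁻¹ (σ₂ g₀) = g * g₀) →
      (∃ σ₁ σ₂ : Equiv.Perm G, IsTwoFoldAuto Γ σ₁ σ₂ ∧ σ₁⁻¹ (σ₂ 1) = g) := by
    rintro ⟨g₀, σ₁, σ₂, htf, heq⟩
    refine ⟨σ₁ * Equiv.mulRight g₀, σ₂ * Equiv.mulRight g₀, tf_mul_right htf g₀, ?_⟩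
    have h2 : σ₂ g₀ = σ₁ (g * g₀) := by
      rw [← heq, Equiv.Perm.apply_inv_self]
    have h3 : (σ₂ * Equiv.mulRight g₀) 1 = (σ₁ * Equiv.mulRight g₀) g := by
      simp only [Equiv.Perm.mul_apply, Equiv.coe_mulRight, one_mul]
      exact h2
    rw [h3, Equiv.Perm.inv_apply_self]
  -- (ii) → (iv)
  have h24 : (∃ σ₁ σ₂ : Equiv.Perm G, IsTwoFoldAuto Γ σ₁ σ₂ ∧ σ₁⁻¹ (σ₂ 1) = g) →
      (∀ g₀ : G, ∃ σ₁ σ₂ : Equiv.Perm G,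
        IsTwoFoldAuto Γ σ₁ σ₂ ∧ σ₁⁻¹ (σ₂ g₀) = g * g₀) := by
    rintro ⟨σ₁, σ₂, htf, heq⟩ g₀
    refine ⟨σ₁ * Equiv.mulRight g₀⁻¹, σ₂ * Equiv.mulRight g₀⁻¹,
      tf_mul_right htf g₀⁻¹, ?_⟩
    have h2 : σ₂ 1 = σ₁ g := by
      rw [← heq, Equiv.Perm.apply_inv_self]
    have h3 : (σ₂ * Equiv.mulRight g₀⁻¹) g₀ = (σ₁ * Equiv.mulRight g₀⁻¹) (g * g₀) := by
      simp only [Equiv.Perm.mul_apply, Equiv.coe_mulRight, mul_inv_cancel,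
        mul_inv_cancel_right]
      exact h2
    rw [h3, Equiv.Perm.inv_apply_self]
  refine ⟨?_, ?_, ?_⟩
  · constructor
    · -- (i) → (ii)
      rintro ⟨φ, h0, h1⟩
      have hpre : (tensorK2 Γ).Preconnected := tensor_preconnected hconn 1 hnbip
      have hpar : ∀ p, (φ p).2 = p.2 := iso_parity φ hpre h0
      have hpar' : ∀ p, (φ.symm p).2 = p.2 := by
        intro p
        have := hpar (φ.symm p)
        rw [φ.apply_symm_apply] at this
        exact this.symm
      have hfix0 : ∀ v : G, φ (v, 0) = ((φ (v, 0)).1, 0) :=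
        fun v => Prod.ext rfl (hpar (v, 0))
      have hfix1 : ∀ v : G, φ (v, 1) = ((φ (v, 1)).1, 1) :=
        fun v => Prod.ext rfl (hpar (v, 1))
      have hfix0' : ∀ v : G, φ.symm (v, 0) = ((φ.symm (v, 0)).1, 0) :=
        fun v => Prod.ext rfl (hpar' (v, 0))
      have hfix1' : ∀ v : G, φ.symm (v, 1) = ((φ.symm (v, 1)).1, 1) :=
        fun v => Prod.ext rfl (hpar' (v, 1))
      set σ₁ : Equiv.Perm G :=
        { toFun := fun v => (φ (v, 0)).1
          invFun := fun v => (φ.symm (v, 0)).1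
          left_inv := by
            intro v
            show (φ.symm ((φ (v, 0)).1, 0)).1 = v
            rw [← hfix0 v, φ.symm_apply_apply]
          right_inv := by
            intro v
            show (φ ((φ.symm (v, 0)).1, 0)).1 = v
            rw [← hfix0' v, φ.apply_symm_apply] } with hσ₁
      set σ₂ : Equiv.Perm G :=
        { toFun := fun v => (φ (v, 1)).1
          invFun := fun v => (φ.symm (v, 1)).1
          left_inv := by
            intro v
            show (φ.symm ((φ (v, 1)).1, 1)).1 = v
            rw [← hfix1 v, φ.symm_apply_apply]
          right_inv := by
            intro v
            show (φ ((φ.symm (v, 1)).1, 1)).1 = v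
            rw [← hfix1' v, φ.apply_symm_apply] } with hσ₂
      have htf : IsTwoFoldAuto Γ σ₁ σ₂ := by
        intro v w
        have e1 : Γ.Adj v w ↔ (tensorK2 Γ).Adj (v, 0) (w, 1) :=
          ⟨fun h => ⟨h, by simp⟩, fun h => h.1⟩
        have e2 : (tensorK2 Γ).Adj (v, 0) (w, 1) ↔
            (tensorK2 Γ).Adj (φ (v, 0)) (φ (w, 1)) := φ.map_adj_iff.symm
        have e3 : (tensorK2 Γ).Adj (φ (v, 0)) (φ (w, 1)) ↔ Γ.Adj (σ₁ v) (σ₂ w) := by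
          rw [hfix0 v, hfix1 w]
          exact ⟨fun h => h.1, fun h => ⟨h, by simp⟩⟩
        exact (e1.trans e2).trans e3
      have hs1 : σ₁ 1 = 1 := by
        show (φ (1, 0)).1 = 1
        rw [h0]
      have hs2 : σ₂ 1 = g := by
        show (φ (1, 1)).1 = g
        rw [h1]
      refine ⟨σ₂⁻¹, σ₁⁻¹, tf_swap_inv htf, ?_⟩
      have : σ₁⁻¹ 1 = 1 := by
        conv_lhs => rw [← hs1]
        rw [Equiv.Perm.inv_apply_self]
      rw [this, inv_inv, hs2]
    · -- (ii) → (i)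
      rintro ⟨σ₁, σ₂, htf, heq⟩
      set a := σ₂ 1 with ha
      set τ₁ : Equiv.Perm G := σ₂⁻¹ * Equiv.mulRight a with hτ₁
      set τ₂ : Equiv.Perm G := σ₁⁻¹ * Equiv.mulRight a with hτ₂
      have htf' : IsTwoFoldAuto Γ τ₁ τ₂ := tf_mul_right (tf_swap_inv htf) a
      refine ⟨mkIso Γ τ₁ τ₂ htf', ?_, ?_⟩
      · have : τ₁ 1 = 1 := by
          simp only [hτ₁, Equiv.Perm.mul_apply, Equiv.coe_mulRight, one_mul, ha,
            Equiv.Perm.inv_apply_self]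
        show ((if (0 : ZMod 2) = 0 then τ₁ 1 else τ₂ 1), (0 : ZMod 2)) = ((1 : G), 0)
        rw [if_pos rfl, this]
      · have : τ₂ 1 = g := by
          simp only [hτ₂, Equiv.Perm.mul_apply, Equiv.coe_mulRight, one_mul, ha]
          exact heq
        show ((if (1 : ZMod 2) = 0 then τ₁ 1 else τ₂ 1), (1 : ZMod 2)) = (g, 1)
        rw [if_neg (by decide), this]
  · constructor
    · rintro ⟨σ₁, σ₂, htf, heq⟩
      exact ⟨1, σ₁, σ₂, htf, by simpa using heq⟩
    · exact h32
  · constructor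
    · intro h
      exact h24 (h32 h)
    · intro h
      exact ⟨1, h 1⟩
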